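/- Let Q be a positive integer, let T ⊆ ℝ^Q be a nonempty bounded set, and let φ : ℝ → ℝ be M-Lipschitz with φ(0) = 0. Let ε = (ε_1, …, ε_Q) be uniformly distributed on {−1, +1}^Q (i.e., ε_1, …, ε_Q are i.i.d. with P(ε_q = 1) = P(ε_q = −1) = 1/2). Then E_ε[ sup_{t ∈ T} | Σ_{q=1}^Q ε_q φ(t_q) | ] ≤ 2M · E_ε[ sup_{t ∈ T} | Σ_{q=1}^Q ε_q t_q | ]. -/

import Mathlib

/-- The Rademacher sign associated with a Boolean coin flip. -/
def radSign (b : Bool) : ℝ := if b then 1 else -1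

/-!
Ledoux–Talagrand comparison, one coordinate at a time. Pair each sign vector `ε` with the vector
that differs from it only at `i`. For two points `s, t` the Lipschitz bound
`φ(s_i) - φ(t_i) ≤ M |s_i - t_i|` makes `(φ(s_i) + r_s) + (-φ(t_i) + r_t)` at most one of the two
cross sums `(±M s_i + r_s) + (∓M t_i + r_t)`, so on average over the pair, replacing `φ(t_i)` by
`M t_i` does not decrease `sup_t Σ_q ε_q ·`. The absolute value costs the factor `2`: after
adjoining `0` to the set (where `φ` vanishes) both `sup_t Σ_q ε_q φ(t_q)` and its sign-flipped
version are nonnegative, so they bound `sup_t |Σ_q ε_q φ(t_q)|` by their sum, whose average is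
twice the average without absolute value.
-/

open Function Set

@[simp] lemma radSign_true : radSign true = 1 := rfl

@[simp] lemma radSign_false : radSign false = -1 := rfl

lemma radSign_not (b : Bool) : radSign (!b) = -radSign b := by cases b <;> simp

lemma abs_radSign (b : Bool) : |radSign b| = 1 := by cases b <;> simp

lemma Fintype.sum_le_sum_of_involutive {β M : Type*} [Fintype β] [AddCommMonoid M]
    [LinearOrder M] [IsOrderedCancelAddMonoid M] {F G : β → M} {σ : β → β} (hσ : Involutive σ)
    (h : ∀ x, F x + F (σ x) ≤ G x + G (σ x)) :
    ∑ x, F x ≤ ∑ x, G x := by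
  have hsum := Finset.sum_le_sum fun x (_ : x ∈ Finset.univ) => h x
  have hF : ∑ x, F (σ x) = ∑ x, F x := Equiv.sum_comp (hσ.toPerm σ) F
  have hG : ∑ x, G (σ x) = ∑ x, G x := Equiv.sum_comp (hσ.toPerm σ) G
  rw [Finset.sum_add_distrib, Finset.sum_add_distrib, hF, hG, ← two_nsmul, ← two_nsmul] at hsum
  exact le_of_nsmul_le_nsmul_right two_ne_zero hsum

lemma iSup_add_iSup_neg_le_of_abs_sub_le {α : Type*} [Nonempty α] {u w r : α → ℝ}
    (huw : ∀ a b, |u a - u b| ≤ |w a - w b|)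
    (hpos : BddAbove (range fun a => w a + r a)) (hneg : BddAbove (range fun a => -w a + r a)) :
    (⨆ a, u a + r a) + ⨆ a, -u a + r a ≤ (⨆ a, w a + r a) + ⨆ a, -w a + r a := by
  set B := (⨆ a, w a + r a) + ⨆ a, -w a + r a
  have pair : ∀ a b, (u a + r a) + (-u b + r b) ≤ B := by
    intro a b
    have hu := (le_abs_self _).trans (huw a b)
    rcases le_total (w b) (w a) with hab | hab
    · rw [abs_of_nonneg (sub_nonneg.2 hab)] at hu
      linarith [le_ciSup hpos a, le_ciSup hneg b]
    · rw [abs_of_nonpos (sub_nonpos.2 hab)] at hu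
      linarith [le_ciSup hpos b, le_ciSup hneg a]
  have : ∀ a, u a + r a ≤ B - ⨆ b, -u b + r b := fun a =>
    le_sub_comm.1 (ciSup_le fun b => le_sub_iff_add_le'.2 (pair a b))
  linarith [ciSup_le this]

lemma iSup_abs_le_iSup_add_iSup_neg {X : Type*} {S T : Set X} (hST : S ⊆ T) {x₀ : X}
    (hx₀ : x₀ ∈ T) {f : X → ℝ} (hf₀ : f x₀ = 0)
    (hpos : BddAbove (range fun t : T => f t)) (hneg : BddAbove (range fun t : T => -f t)) :
    ⨆ t : S, |f t| ≤ (⨆ t : T, f t) + ⨆ t : T, -f t := by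
  have hpos0 : 0 ≤ ⨆ t : T, f t := hf₀ ▸ le_ciSup hpos ⟨x₀, hx₀⟩
  have hneg0 : 0 ≤ ⨆ t : T, -f t := by simpa [hf₀] using le_ciSup hneg ⟨x₀, hx₀⟩
  refine Real.iSup_le (fun t => abs_le'.2 ⟨?_, ?_⟩) (add_nonneg hpos0 hneg0)
  · linarith [le_ciSup hpos ⟨t, hST t.2⟩]
  · linarith [le_ciSup hneg ⟨t, hST t.2⟩]

variable {ι : Type*} [Fintype ι]

def rademacherSum (ε : ι → Bool) (x : ι → ℝ) : ℝ := ∑ i, radSign (ε i) * x i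

lemma rademacherSum_not (ε : ι → Bool) (x : ι → ℝ) :
    rademacherSum (fun i => !ε i) x = -rademacherSum ε x := by
  simp [rademacherSum, radSign_not, Finset.sum_neg_distrib]

lemma rademacherSum_const_mul (ε : ι → Bool) (c : ℝ) (x : ι → ℝ) :
    rademacherSum ε (fun i => c * x i) = c * rademacherSum ε x := by
  simp only [rademacherSum, Finset.mul_sum, mul_left_comm]

lemma abs_rademacherSum_le (ε : ι → Bool) {x : ι → ℝ} {C : ℝ} (hx : ∀ i, |x i| ≤ C) :
    |rademacherSum ε x| ≤ Fintype.card ι * C :=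
  calc |rademacherSum ε x| ≤ ∑ i, |radSign (ε i) * x i| := Finset.abs_sum_le_sum_abs _ _
    _ ≤ ∑ _i : ι, C := Finset.sum_le_sum fun i _ => by
      rw [abs_mul, abs_radSign, one_mul]; exact hx i
    _ = Fintype.card ι * C := by simp

lemma bddAbove_range_abs_rademacherSum {α : Type*} {v : α → ι → ℝ} {C : ℝ}
    (hv : ∀ a i, |v a i| ≤ C) (ε : ι → Bool) :
    BddAbove (range fun a => |rademacherSum ε (v a)|) :=
  ⟨_, forall_mem_range.2 fun a => abs_rademacherSum_le ε (hv a)⟩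

lemma bddAbove_range_rademacherSum {α : Type*} {v : α → ι → ℝ} {C : ℝ}
    (hv : ∀ a i, |v a i| ≤ C) (ε : ι → Bool) :
    BddAbove (range fun a => rademacherSum ε (v a)) :=
  (bddAbove_range_abs_rademacherSum hv ε).range_mono _ fun _ => le_abs_self _

lemma iSup_insert_zero_rademacherSum_const_mul_le {S : Set (ι → ℝ)} {M : ℝ} (hM : 0 ≤ M)
    (ε : ι → Bool) (hS : BddAbove (range fun t : S => |rademacherSum ε t|)) :
    ⨆ t : ↥(insert 0 S), rademacherSum ε (fun i => M * t.1 i)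
      ≤ M * ⨆ t : S, |rademacherSum ε t| := by
  refine Real.iSup_le (fun ⟨t, ht⟩ => ?_) (mul_nonneg hM (Real.iSup_nonneg fun _ => abs_nonneg _))
  rw [rademacherSum_const_mul]
  rcases ht with rfl | ht
  · simpa [rademacherSum] using mul_nonneg hM (Real.iSup_nonneg fun _ => abs_nonneg _)
  · exact mul_le_mul_of_nonneg_left ((le_abs_self _).trans (le_ciSup hS ⟨t, ht⟩)) hM

variable [DecidableEq ι]

lemma rademacherSum_eq_add_sum_compl (ε : ι → Bool) (x : ι → ℝ) (i : ι) :
    rademacherSum ε x = radSign (ε i) * x i + ∑ j ∈ {i}ᶜ, radSign (ε j) * x j :=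
  Fintype.sum_eq_add_sum_compl i _

lemma sum_compl_radSign_update (ε : ι → Bool) (x : ι → ℝ) (i : ι) (b : Bool) :
    ∑ j ∈ {i}ᶜ, radSign (update ε i b j) * x j = ∑ j ∈ {i}ᶜ, radSign (ε j) * x j :=
  Finset.sum_congr rfl fun j hj => by rw [update_of_ne (by simpa using hj)]

lemma sum_iSup_neg_rademacherSum {α : Type*} (v : α → ι → ℝ) :
    ∑ ε : ι → Bool, ⨆ a, -rademacherSum ε (v a) = ∑ ε : ι → Bool, ⨆ a, rademacherSum ε (v a) := by
  have hnot : Involutive fun ε : ι → Bool => fun i => !ε i := fun ε => by simp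
  simp only [← rademacherSum_not]
  exact Equiv.sum_comp (hnot.toPerm _) fun ε => ⨆ a, rademacherSum ε (v a)

theorem sum_iSup_rademacherSum_le_of_eqOn_compl {α : Type*} [Nonempty α]
    {v w : α → ι → ℝ} (i : ι) (hvw : ∀ a b, |v a i - v b i| ≤ |w a i - w b i|)
    (heq : ∀ a, EqOn (v a) (w a) {i}ᶜ) {C : ℝ} (hw : ∀ a j, |w a j| ≤ C) :
    ∑ ε : ι → Bool, ⨆ a, rademacherSum ε (v a) ≤ ∑ ε : ι → Bool, ⨆ a, rademacherSum ε (w a) := by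
  refine Fintype.sum_le_sum_of_involutive (σ := fun ε => update ε i (!ε i))
    (fun ε => by simp) fun ε => ?_
  -- the condition is symmetric under flipping coordinate `i`
  wlog hε : ε i = true generalizing ε
  · simpa [add_comm] using this (update ε i (!ε i)) (by simpa using hε)
  have hrest : ∀ a, ∑ j ∈ {i}ᶜ, radSign (ε j) * w a j = ∑ j ∈ {i}ᶜ, radSign (ε j) * v a j :=
    fun a => Finset.sum_congr rfl fun j hj => by rw [heq a (by simpa using hj)]
  have hpos := bddAbove_range_rademacherSum hw ε
  have hneg := bddAbove_range_rademacherSum hw (update ε i (!ε i))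
  simp only [rademacherSum_eq_add_sum_compl _ _ i, sum_compl_radSign_update, hrest, update_self,
    hε, Bool.not_true, radSign_true, radSign_false, one_mul, neg_one_mul] at hpos hneg ⊢
  exact iSup_add_iSup_neg_le_of_abs_sub_le (hvw · ·) hpos hneg

theorem sum_iSup_rademacherSum_le_of_abs_sub_le {α : Type*} [Nonempty α] {v w : α → ι → ℝ}
    (hvw : ∀ a b i, |v a i - v b i| ≤ |w a i - w b i|) {C : ℝ}
    (hv : ∀ a i, |v a i| ≤ C) (hw : ∀ a i, |w a i| ≤ C) :
    ∑ ε : ι → Bool, ⨆ a, rademacherSum ε (v a) ≤ ∑ ε : ι → Bool, ⨆ a, rademacherSum ε (w a) := by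
  suffices ∀ A : Finset ι, ∑ ε : ι → Bool, ⨆ a, rademacherSum ε (v a)
      ≤ ∑ ε : ι → Bool, ⨆ a, rademacherSum ε (A.piecewise (w a) (v a)) by
    simpa using this Finset.univ
  intro A
  induction A using Finset.induction_on with
  | empty => simp
  | insert i A hi ih =>
    have hbound : ∀ a j, |(insert i A).piecewise (w a) (v a) j| ≤ C := fun a j =>
      Finset.piecewise_cases (insert i A) (w a) (v a) (i := j) (fun x => |x| ≤ C) (hw a j) (hv a j)
    refine ih.trans (sum_iSup_rademacherSum_le_of_eqOn_compl i (fun a b => ?_)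
      (fun a j hj => ?_) hbound)
    · simpa [Finset.piecewise_eq_of_notMem _ _ _ hi] using hvw a b i
    · exact (Finset.piecewise_insert_of_ne A (w a) (v a) hj).symm


lemma sum_iSup_abs_rademacherSum_le {X : Type*} {S T : Set X} (hST : S ⊆ T) {x₀ : X}
    (hx₀ : x₀ ∈ T) {v : X → ι → ℝ} (hv₀ : v x₀ = 0) {C : ℝ} (hv : ∀ t : T, ∀ i, |v t i| ≤ C) :
    ∑ ε : ι → Bool, ⨆ t : S, |rademacherSum ε (v t)|
      ≤ 2 * ∑ ε : ι → Bool, ⨆ t : T, rademacherSum ε (v t) :=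
  calc ∑ ε : ι → Bool, ⨆ t : S, |rademacherSum ε (v t)|
      ≤ ∑ ε : ι → Bool, ((⨆ t : T, rademacherSum ε (v t)) + ⨆ t : T, -rademacherSum ε (v t)) :=
        Finset.sum_le_sum fun ε _ => iSup_abs_le_iSup_add_iSup_neg hST hx₀
          (f := fun t => rademacherSum ε (v t)) (by simp [rademacherSum, hv₀])
          (bddAbove_range_rademacherSum hv ε)
          (by simpa only [← rademacherSum_not] using bddAbove_range_rademacherSum hv _)
    _ = 2 * ∑ ε : ι → Bool, ⨆ t : T, rademacherSum ε (v t) := by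
      rw [Finset.sum_add_distrib, sum_iSup_neg_rademacherSum fun t : T => v t]; ring

theorem rademacher_contraction_general
    {Q : ℕ} (S : Set (Fin Q → ℝ))
    (hSb : Bornology.IsBounded S)
    (φ : ℝ → ℝ) (M : ℝ) (hM : 0 ≤ M)
    (hLip : ∀ a b : ℝ, |φ a - φ b| ≤ M * |a - b|) (hφ0 : φ 0 = 0) :
    (∑ ε : Fin Q → Bool, ⨆ t : S, |∑ q, radSign (ε q) * φ (t.1 q)|) / 2 ^ Q
      ≤ 2 * M *
        ((∑ ε : Fin Q → Bool, ⨆ t : S, |∑ q, radSign (ε q) * t.1 q|) / 2 ^ Q) := by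
  set T : Set (Fin Q → ℝ) := insert 0 S
  have : Nonempty T := ⟨⟨0, mem_insert 0 S⟩⟩
  obtain ⟨C, hC⟩ := (hSb.insert 0).exists_norm_le
  have hT : ∀ t : T, ∀ q, |t.1 q| ≤ C := fun t q => (norm_le_pi_norm t.1 q).trans (hC t t.2)
  have hMT : ∀ t : T, ∀ q, |M * t.1 q| ≤ M * C := fun t q => by
    rw [abs_mul, abs_of_nonneg hM]; exact mul_le_mul_of_nonneg_left (hT t q) hM
  have hφT : ∀ t : T, ∀ q, |φ (t.1 q)| ≤ M * C := fun t q => by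
    simpa [hφ0] using (hLip (t.1 q) 0).trans (mul_le_mul_of_nonneg_left (by simpa using hT t q) hM)
  have hcompare := sum_iSup_rademacherSum_le_of_abs_sub_le (v := fun (t : T) q => φ (t.1 q))
    (fun s t q => by rw [← mul_sub, abs_mul, abs_of_nonneg hM]; exact hLip _ _) hφT hMT
  have hlin (ε : Fin Q → Bool) := iSup_insert_zero_rademacherSum_const_mul_le hM ε
    (bddAbove_range_abs_rademacherSum (fun (t : S) q => hT ⟨t, subset_insert 0 S t.2⟩ q) ε)
  rw [← mul_div_assoc]
  refine div_le_div_of_nonneg_right ?_ (by positivity)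
  calc (∑ ε : Fin Q → Bool, ⨆ t : S, |rademacherSum ε fun q => φ (t.1 q)|)
      ≤ 2 * ∑ ε : Fin Q → Bool, ⨆ t : T, rademacherSum ε fun q => φ (t.1 q) :=
        sum_iSup_abs_rademacherSum_le (subset_insert 0 S) (mem_insert 0 S)
          (v := fun t q => φ (t q)) (funext fun _ => hφ0) hφT
    _ ≤ 2 * ∑ ε : Fin Q → Bool, ⨆ t : T, rademacherSum ε fun q => M * t.1 q :=
      mul_le_mul_of_nonneg_left hcompare zero_le_two
    _ ≤ 2 * ∑ ε : Fin Q → Bool, M * ⨆ t : S, |rademacherSum ε t| :=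
      mul_le_mul_of_nonneg_left (Finset.sum_le_sum fun ε _ => hlin ε) zero_le_two
    _ = 2 * M * ∑ ε : Fin Q → Bool, ⨆ t : S, |rademacherSum ε t| := by
      rw [← Finset.mul_sum]; ring

/-- (Rademacher contraction principle.) For a nonempty bounded set
`S ⊆ ℝ^Q`, an `M`-Lipschitz function `φ : ℝ → ℝ` with `φ(0) = 0`, and uniform i.i.d. signs
`ε`, `E_ε[sup_{t∈S} |Σ_q ε_q φ(t_q)|] ≤ 2M · E_ε[sup_{t∈S} |Σ_q ε_q t_q|]`. -/
theorem rademacher_contraction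
    {Q : ℕ} (hQ : 0 < Q) (S : Set (Fin Q → ℝ)) (hSne : S.Nonempty)
    (hSb : Bornology.IsBounded S)
    (φ : ℝ → ℝ) (M : ℝ) (hM : 0 ≤ M)
    (hLip : ∀ a b : ℝ, |φ a - φ b| ≤ M * |a - b|) (hφ0 : φ 0 = 0) :
    (∑ ε : Fin Q → Bool, ⨆ t : S, |∑ q, radSign (ε q) * φ (t.1 q)|) / 2 ^ Q
      ≤ 2 * M *
        ((∑ ε : Fin Q → Bool, ⨆ t : S, |∑ q, radSign (ε q) * t.1 q|) / 2 ^ Q) :=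
  rademacher_contraction_general S hSb φ M hM hLip hφ0
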